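/- Let A⁺, A⁻ ⊆ ℝⁿ be disjoint finite sets with A⁺ ≠ ∅ and A⁻ ≠ ∅, and set A = A⁺ ∪ A⁻. For each β ∈ A⁻ let C^A_{(A⁺,{β})} denote the set of vectors in ℝ^A that vanish on A⁻ \ {β} and whose restriction to A⁺ ∪ {β} belongs to C_{(A⁺,{β})}. Then the signed SONC cone decomposes as a Minkowski sum: C_{(A⁺,A⁻)} = ∑_{β∈A⁻} C^A_{(A⁺,{β})}. -/

import Mathlib

open Finset Pointwise

/-- The exponential sum with support `A` and coefficient vector `v`. -/
noncomputable def expSum {n : ℕ} (A : Finset (Fin n → ℝ)) (v : (Fin n → ℝ) → ℝ)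
    (x : Fin n → ℝ) : ℝ :=
  ∑ γ ∈ A, v γ * Real.exp (∑ i, x i * γ i)

/-- The signed SONC (= SAGE) cone `C_{(A⁺,A⁻)}`. -/
def InSAGE {n : ℕ} (Ap An : Finset (Fin n → ℝ)) (c : (Fin n → ℝ) → ℝ) : Prop :=
  (∀ α ∈ Ap, 0 ≤ c α) ∧ (∀ β ∈ An, c β ≤ 0) ∧
  ∃ (m : ℕ) (d : Fin m → (Fin n → ℝ) → ℝ),
    (∀ γ ∈ Ap ∪ An, c γ = ∑ i, d i γ) ∧
    (∀ i, ∀ γ₁ ∈ Ap ∪ An, ∀ γ₂ ∈ Ap ∪ An, d i γ₁ < 0 → d i γ₂ < 0 → γ₁ = γ₂) ∧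
    (∀ i, ∀ x : Fin n → ℝ, 0 ≤ expSum (Ap ∪ An) (d i) x)

/-- `C^A_{(A⁺,{β})}`: vectors on `A = A⁺ ∪ A⁻` vanishing on `A⁻ \ {β}` whose restriction to
`A⁺ ∪ {β}` lies in `C_{(A⁺,{β})}`. -/
def SAGEExt {n : ℕ} (Ap An : Finset (Fin n → ℝ)) (β : Fin n → ℝ) :
    Set ((Fin n → ℝ) → ℝ) :=
  {c | (∀ γ ∈ An, γ ≠ β → c γ = 0) ∧ InSAGE Ap {β} c}

/-! Two AGE summands of opposite signs at a point `γ` can be replaced by two nonnegative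
recombinations of them, one of which vanishes at `γ`. This lowers the number of summands that do
not vanish at `γ`, and every sign that all summands shared at some point is kept. Doing this at
every point of `A` makes all summands nonnegative on `A⁺` and nonpositive on `A⁻`, because their
sum is. Such a summand vanishes on `A⁻` away from its only negative entry `β` (away from any
`β ∈ A⁻` if it has none), so it lies in `C^A_{(A⁺,{β})}`; and these cones, like `C_{(A⁺,A⁻)}`
itself, are closed under addition. -/

section

variable {n : ℕ}

lemma expSum_add (S : Finset (Fin n → ℝ)) (f g : (Fin n → ℝ) → ℝ) (x : Fin n → ℝ) :
    expSum S (f + g) x = expSum S f x + expSum S g x := by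
  simp only [expSum, Pi.add_apply, add_mul, sum_add_distrib]

lemma expSum_smul (S : Finset (Fin n → ℝ)) (t : ℝ) (f : (Fin n → ℝ) → ℝ) (x : Fin n → ℝ) :
    expSum S (t • f) x = t * expSum S f x := by
  simp only [expSum, Pi.smul_apply, smul_eq_mul, mul_sum, mul_assoc]

lemma expSum_eq_of_subset {S T : Finset (Fin n → ℝ)} (hST : S ⊆ T) {f : (Fin n → ℝ) → ℝ}
    (hf : ∀ γ ∈ T, γ ∉ S → f γ = 0) (x : Fin n → ℝ) : expSum S f x = expSum T f x :=
  sum_subset hST fun γ hγT hγS => by rw [hf γ hγT hγS, zero_mul]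

def IsAGE (S : Finset (Fin n → ℝ)) (f : (Fin n → ℝ) → ℝ) : Prop :=
  (∀ γ₁ ∈ S, ∀ γ₂ ∈ S, f γ₁ < 0 → f γ₂ < 0 → γ₁ = γ₂) ∧ ∀ x, 0 ≤ expSum S f x

lemma isAGE_empty (f : (Fin n → ℝ) → ℝ) : IsAGE ∅ f :=
  ⟨by simp, by simp [expSum]⟩

lemma isAGE_congr {S : Finset (Fin n → ℝ)} {f g : (Fin n → ℝ) → ℝ} (hfg : Set.EqOn f g S) :
    IsAGE S f ↔ IsAGE S g := by
  have hexp : ∀ x, expSum S f x = expSum S g x := fun x =>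
    sum_congr rfl fun γ hγ => by rw [hfg hγ]
  unfold IsAGE
  simp only [hexp]
  constructor <;> rintro ⟨huniq, hpos⟩ <;> refine ⟨fun γ₁ h₁ γ₂ h₂ => ?_, hpos⟩
  · simpa only [hfg h₁, hfg h₂] using huniq γ₁ h₁ γ₂ h₂
  · simpa only [hfg h₁, hfg h₂] using huniq γ₁ h₁ γ₂ h₂

lemma isAGE_iff_of_subset {S T : Finset (Fin n → ℝ)} (hST : S ⊆ T) {f : (Fin n → ℝ) → ℝ}
    (hf : ∀ γ ∈ T, γ ∉ S → f γ = 0) : IsAGE S f ↔ IsAGE T f := by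
  have hneg : ∀ γ ∈ T, f γ < 0 → γ ∈ S := fun γ hγ hlt => by
    by_contra hγS
    exact hlt.ne (hf γ hγ hγS)
  unfold IsAGE
  simp only [expSum_eq_of_subset hST hf]
  constructor <;> rintro ⟨huniq, hpos⟩ <;> refine ⟨fun γ₁ h₁ γ₂ h₂ => ?_, hpos⟩
  · exact fun hlt₁ hlt₂ => huniq γ₁ (hneg γ₁ h₁ hlt₁) γ₂ (hneg γ₂ h₂ hlt₂) hlt₁ hlt₂
  · exact huniq γ₁ (hST h₁) γ₂ (hST h₂)

lemma IsAGE.smul {S : Finset (Fin n → ℝ)} {f : (Fin n → ℝ) → ℝ} (hf : IsAGE S f) {t : ℝ}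
    (ht : 0 ≤ t) : IsAGE S (t • f) :=
  ⟨fun γ₁ h₁ γ₂ h₂ hlt₁ hlt₂ =>
    hf.1 γ₁ h₁ γ₂ h₂ (neg_of_mul_neg_right hlt₁ ht) (neg_of_mul_neg_right hlt₂ ht),
   fun x => by rw [expSum_smul]; exact mul_nonneg ht (hf.2 x)⟩

lemma IsAGE.smul_add_smul {S : Finset (Fin n → ℝ)} {f g : (Fin n → ℝ) → ℝ} (hf : IsAGE S f)
    (hg : IsAGE S g) {a b : ℝ} (ha : 0 ≤ a) (hb : 0 ≤ b) {γ₀ : Fin n → ℝ} (hγ₀ : γ₀ ∈ S)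
    (hgγ₀ : g γ₀ < 0) (hcancel : a * f γ₀ + b * g γ₀ = 0) : IsAGE S (a • f + b • g) := by
  have hneg : ∀ γ ∈ S, a * f γ + b * g γ < 0 → f γ < 0 := fun γ hγ hlt => by
    by_contra! hfγ
    have hgγ : g γ < 0 := neg_of_mul_neg_right (by nlinarith [mul_nonneg ha hfγ]) hb
    rw [hg.1 γ hγ γ₀ hγ₀ hgγ hgγ₀] at hlt
    exact hlt.ne hcancel
  refine ⟨fun γ₁ h₁ γ₂ h₂ hlt₁ hlt₂ => hf.1 γ₁ h₁ γ₂ h₂ (hneg γ₁ h₁ hlt₁) (hneg γ₂ h₂ hlt₂),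
    fun x => ?_⟩
  rw [expSum_add, expSum_smul, expSum_smul]
  exact add_nonneg (mul_nonneg ha (hf.2 x)) (mul_nonneg hb (hg.2 x))

lemma IsAGE.exists_merge {S : Finset (Fin n → ℝ)} {f g : (Fin n → ℝ) → ℝ} (hf : IsAGE S f)
    (hg : IsAGE S g) {γ₀ : Fin n → ℝ} (hγ₀ : γ₀ ∈ S) (hfγ₀ : 0 < f γ₀) (hgγ₀ : g γ₀ < 0) :
    ∃ a b : ℝ, 0 ≤ a ∧ a ≤ 1 ∧ 0 ≤ b ∧ b ≤ 1 ∧ a * f γ₀ + b * g γ₀ = 0 ∧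
      IsAGE S (a • f + b • g) ∧ IsAGE S ((1 - a) • f + (1 - b) • g) := by
  suffices h : ∃ a b : ℝ, 0 ≤ a ∧ a ≤ 1 ∧ 0 ≤ b ∧ b ≤ 1 ∧ a * f γ₀ + b * g γ₀ = 0 ∧
      (a = 1 ∨ b = 1) by
    obtain ⟨a, b, ha₀, ha₁, hb₀, hb₁, hcancel, hone⟩ := h
    refine ⟨a, b, ha₀, ha₁, hb₀, hb₁, hcancel,
      hf.smul_add_smul hg ha₀ hb₀ hγ₀ hgγ₀ hcancel, ?_⟩
    rcases hone with rfl | rfl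
    · simpa using hg.smul (sub_nonneg.2 hb₁)
    · simpa using hf.smul (sub_nonneg.2 ha₁)
  have hg' : 0 < -g γ₀ := neg_pos.2 hgγ₀
  rcases le_total (f γ₀) (-g γ₀) with hle | hle
  · refine ⟨1, f γ₀ / -g γ₀, zero_le_one, le_rfl, div_nonneg hfγ₀.le hg'.le,
      (div_le_one hg').2 hle, ?_, Or.inl rfl⟩
    field_simp [hgγ₀.ne]
    ring
  · refine ⟨-g γ₀ / f γ₀, 1, div_nonneg hg'.le hfγ₀.le, (div_le_one hfγ₀).2 hle, zero_le_one,
      le_rfl, ?_, Or.inr rfl⟩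
    field_simp [hfγ₀.ne']
    ring

def OneSignedAt (s : Multiset ((Fin n → ℝ) → ℝ)) (γ : Fin n → ℝ) : Prop :=
  (∀ f ∈ s, f γ ≤ 0) ∨ ∀ f ∈ s, 0 ≤ f γ

lemma OneSignedAt.nonpos {s : Multiset ((Fin n → ℝ) → ℝ)} {γ : Fin n → ℝ} (h : OneSignedAt s γ)
    (hs : s.sum γ ≤ 0) : ∀ f ∈ s, f γ ≤ 0 := by
  refine h.elim id fun hnonneg f hf => ?_
  calc f γ ≤ (s.map (· γ)).sum :=
        Multiset.single_le_sum (by simpa using hnonneg) _ (Multiset.mem_map_of_mem _ hf)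
    _ = s.sum γ := (Pi.multiset_sum_apply γ s).symm
    _ ≤ 0 := hs

lemma OneSignedAt.nonneg {s : Multiset ((Fin n → ℝ) → ℝ)} {γ : Fin n → ℝ} (h : OneSignedAt s γ)
    (hs : 0 ≤ s.sum γ) : ∀ f ∈ s, 0 ≤ f γ := by
  refine h.elim (fun hnonpos f hf => ?_) id
  have hle : -f γ ≤ (s.map (- · γ)).sum :=
    Multiset.single_le_sum (by simpa using hnonpos) _ (Multiset.mem_map_of_mem (- · γ) hf)
  rw [Multiset.sum_map_neg, ← Pi.multiset_sum_apply] at hle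
  linarith

lemma exists_merge_step {S : Finset (Fin n → ℝ)} {γ₀ : Fin n → ℝ} (hγ₀ : γ₀ ∈ S)
    {s : Multiset ((Fin n → ℝ) → ℝ)} (hs : ∀ f ∈ s, IsAGE S f) (h : ¬ OneSignedAt s γ₀) :
    ∃ s' : Multiset ((Fin n → ℝ) → ℝ), (∀ f ∈ s', IsAGE S f) ∧ s'.sum = s.sum ∧
      (∀ γ, OneSignedAt s γ → OneSignedAt s' γ) ∧
      s'.countP (fun f => f γ₀ ≠ 0) < s.countP (fun f => f γ₀ ≠ 0) := by
  classical
  simp only [OneSignedAt, not_or, not_forall, not_le, exists_prop] at h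
  obtain ⟨⟨f, hf, hfγ₀⟩, ⟨g, hg, hgγ₀⟩⟩ := h
  have hgf : g ≠ f := by rintro rfl; linarith
  obtain ⟨t, rfl⟩ : ∃ t, s = f ::ₘ g ::ₘ t := ⟨(s.erase f).erase g, by
    rw [Multiset.cons_erase ((Multiset.mem_erase_of_ne hgf).2 hg), Multiset.cons_erase hf]⟩
  obtain ⟨a, b, ha₀, ha₁, hb₀, hb₁, hcancel, hage₁, hage₂⟩ :=
    (hs f (by simp)).exists_merge (hs g (by simp)) hγ₀ hfγ₀ hgγ₀
  refine ⟨(a • f + b • g) ::ₘ ((1 - a) • f + (1 - b) • g) ::ₘ t, ?_, ?_, ?_, ?_⟩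
  · simp only [Multiset.mem_cons]
    rintro _ (rfl | rfl | ht)
    exacts [hage₁, hage₂, hs _ (by simp [ht])]
  · simp only [Multiset.sum_cons]
    module
  · rintro γ (hle | hge)
    · simp only [Multiset.mem_cons, forall_eq_or_imp] at hle
      obtain ⟨hfγ, hgγ, htγ⟩ := hle
      left
      simp only [Multiset.mem_cons, forall_eq_or_imp, Pi.add_apply, Pi.smul_apply, smul_eq_mul]
      exact ⟨by nlinarith, by nlinarith, htγ⟩
    · simp only [Multiset.mem_cons, forall_eq_or_imp] at hge
      obtain ⟨hfγ, hgγ, htγ⟩ := hge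
      right
      simp only [Multiset.mem_cons, forall_eq_or_imp, Pi.add_apply, Pi.smul_apply, smul_eq_mul]
      exact ⟨by nlinarith, by nlinarith, htγ⟩
  · have hmerged : (a • f + b • g) γ₀ = 0 := hcancel
    simp only [Multiset.countP_cons, hmerged, hfγ₀.ne', hgγ₀.ne, ne_eq, not_true_eq_false,
      not_false_eq_true, if_true, if_false]
    split_ifs <;> omega

lemma exists_oneSignedAt {S : Finset (Fin n → ℝ)} {γ₀ : Fin n → ℝ} (hγ₀ : γ₀ ∈ S)
    (s : Multiset ((Fin n → ℝ) → ℝ)) (hs : ∀ f ∈ s, IsAGE S f) :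
    ∃ s' : Multiset ((Fin n → ℝ) → ℝ), (∀ f ∈ s', IsAGE S f) ∧ s'.sum = s.sum ∧
      (∀ γ, OneSignedAt s γ → OneSignedAt s' γ) ∧ OneSignedAt s' γ₀ := by
  by_cases h : OneSignedAt s γ₀
  · exact ⟨s, hs, rfl, fun _ => id, h⟩
  obtain ⟨s₁, hs₁, hsum₁, hpres₁, hlt⟩ := exists_merge_step hγ₀ hs h
  obtain ⟨s₂, hs₂, hsum₂, hpres₂, hone⟩ := exists_oneSignedAt hγ₀ s₁ hs₁
  exact ⟨s₂, hs₂, hsum₂.trans hsum₁, fun γ hγ => hpres₂ γ (hpres₁ γ hγ), hone⟩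
termination_by s.countP (fun f => f γ₀ ≠ 0)

lemma exists_forall_oneSignedAt {S T : Finset (Fin n → ℝ)} (hTS : T ⊆ S)
    (s : Multiset ((Fin n → ℝ) → ℝ)) (hs : ∀ f ∈ s, IsAGE S f) :
    ∃ s' : Multiset ((Fin n → ℝ) → ℝ), (∀ f ∈ s', IsAGE S f) ∧ s'.sum = s.sum ∧
      ∀ γ ∈ T, OneSignedAt s' γ := by
  classical
  induction T using Finset.induction_on with
  | empty => exact ⟨s, hs, rfl, by simp⟩
  | insert γ T _ ih =>
    obtain ⟨s₁, hs₁, hsum₁, hone₁⟩ := ih ((subset_insert γ T).trans hTS)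
    obtain ⟨s₂, hs₂, hsum₂, hpres₂, hone₂⟩ :=
      exists_oneSignedAt (hTS (mem_insert_self γ T)) s₁ hs₁
    refine ⟨s₂, hs₂, hsum₂.trans hsum₁, fun γ' hγ' => ?_⟩
    rcases mem_insert.1 hγ' with rfl | hγ'
    exacts [hone₂, hpres₂ γ' (hone₁ γ' hγ')]

lemma inSAGE_iff_exists_multiset {Ap An : Finset (Fin n → ℝ)} {c : (Fin n → ℝ) → ℝ} :
    InSAGE Ap An c ↔ (∀ α ∈ Ap, 0 ≤ c α) ∧ (∀ β ∈ An, c β ≤ 0) ∧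
      ∃ s : Multiset ((Fin n → ℝ) → ℝ), (∀ f ∈ s, IsAGE (Ap ∪ An) f) ∧
        ∀ γ ∈ Ap ∪ An, c γ = s.sum γ := by
  refine and_congr_right fun _ => and_congr_right fun _ => ⟨?_, ?_⟩
  · rintro ⟨m, d, hsum, huniq, hpos⟩
    refine ⟨univ.val.map d, ?_, fun γ hγ => ?_⟩
    · simp only [Multiset.mem_map]
      rintro _ ⟨i, -, rfl⟩
      exact ⟨huniq i, hpos i⟩
    · rw [← sum_eq_multiset_sum, Finset.sum_apply, hsum γ hγ]
  · rintro ⟨s, hs, hsum⟩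
    have hmem : ∀ i : Fin s.toList.length, IsAGE (Ap ∪ An) s.toList[i.1] :=
      fun i => hs _ (Multiset.mem_toList.1 (List.getElem_mem _))
    refine ⟨s.toList.length, fun i => s.toList[i.1], fun γ hγ => ?_, fun i => (hmem i).1,
      fun i => (hmem i).2⟩
    rw [← Finset.sum_apply, Fin.sum_univ_getElem, Multiset.sum_toList, hsum γ hγ]

def sageAddSubmonoid (Ap An : Finset (Fin n → ℝ)) : AddSubmonoid ((Fin n → ℝ) → ℝ) where
  carrier := {c | InSAGE Ap An c}
  zero_mem' := inSAGE_iff_exists_multiset.2 ⟨by simp, by simp, 0, by simp, by simp⟩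
  add_mem' := by
    intro c₁ c₂ h₁ h₂
    obtain ⟨hAp₁, hAn₁, s₁, hs₁, hsum₁⟩ := inSAGE_iff_exists_multiset.1 h₁
    obtain ⟨hAp₂, hAn₂, s₂, hs₂, hsum₂⟩ := inSAGE_iff_exists_multiset.1 h₂
    refine inSAGE_iff_exists_multiset.2 ⟨fun α hα => add_nonneg (hAp₁ α hα) (hAp₂ α hα),
      fun β hβ => add_nonpos (hAn₁ β hβ) (hAn₂ β hβ), s₁ + s₂, ?_, fun γ hγ => ?_⟩
    · simp only [Multiset.mem_add]
      rintro f (hf | hf)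
      exacts [hs₁ f hf, hs₂ f hf]
    · rw [Multiset.sum_add, Pi.add_apply, Pi.add_apply, hsum₁ γ hγ, hsum₂ γ hγ]

def sageExtAddSubmonoid (Ap An : Finset (Fin n → ℝ)) (β : Fin n → ℝ) :
    AddSubmonoid ((Fin n → ℝ) → ℝ) where
  carrier := SAGEExt Ap An β
  zero_mem' := ⟨fun _ _ _ => rfl, (sageAddSubmonoid Ap {β}).zero_mem⟩
  add_mem' := fun ⟨hvan₁, h₁⟩ ⟨hvan₂, h₂⟩ =>
    ⟨fun γ hγ hγβ => by simp [hvan₁ γ hγ hγβ, hvan₂ γ hγ hγβ],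
      (sageAddSubmonoid Ap {β}).add_mem h₁ h₂⟩

lemma inSAGE_of_mem_sageExt {Ap An : Finset (Fin n → ℝ)} {β : Fin n → ℝ} (hβ : β ∈ An)
    {c : (Fin n → ℝ) → ℝ} (hc : c ∈ SAGEExt Ap An β) : InSAGE Ap An c := by
  obtain ⟨hvan, hc⟩ := hc
  obtain ⟨hAp, hβ', s, hs, hsum⟩ := inSAGE_iff_exists_multiset.1 hc
  set T : Finset (Fin n → ℝ) := Ap ∪ {β}
  have hTA : T ⊆ Ap ∪ An := union_subset_union_right (singleton_subset_iff.2 hβ)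
  have houtside : ∀ γ ∈ Ap ∪ An, γ ∉ T → γ ∈ An ∧ γ ≠ β := fun γ hγ hγT => by
    simp only [T, mem_union, mem_singleton, not_or] at hγ hγT
    exact ⟨hγ.resolve_left hγT.1, hγT.2⟩
  refine inSAGE_iff_exists_multiset.2
    ⟨hAp, fun γ hγ => ?_, s.map (Set.indicatorHom ℝ (T : Set (Fin n → ℝ))), ?_, fun γ hγ => ?_⟩
  · rcases eq_or_ne γ β with rfl | hγβ
    exacts [hβ' γ (mem_singleton_self γ), (hvan γ hγ hγβ).le]
  · refine Multiset.forall_mem_map_iff.2 fun f hf => ?_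
    change IsAGE _ ((T : Set (Fin n → ℝ)).indicator f)
    rw [← isAGE_iff_of_subset hTA fun γ _ hγT => Set.indicator_of_notMem hγT f,
      isAGE_congr Set.eqOn_indicator]
    exact hs f hf
  · rw [← map_multiset_sum]
    by_cases hγT : γ ∈ T
    · exact (hsum γ hγT).trans (Set.indicator_of_mem hγT _).symm
    · obtain ⟨hγAn, hγβ⟩ := houtside γ hγ hγT
      exact (hvan γ hγAn hγβ).trans (Set.indicator_of_notMem hγT _).symm

lemma InSAGE.exists_signed_decomposition {Ap An : Finset (Fin n → ℝ)} {c : (Fin n → ℝ) → ℝ}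
    (hc : InSAGE Ap An c) :
    ∃ s : Multiset ((Fin n → ℝ) → ℝ), s.sum = c ∧ ∀ f ∈ s,
      IsAGE (Ap ∪ An) f ∧ (∀ α ∈ Ap, 0 ≤ f α) ∧ ∀ β ∈ An, f β ≤ 0 := by
  obtain ⟨hAp, hAn, s, hs, hsum⟩ := inSAGE_iff_exists_multiset.1 hc
  -- `s` matches `c` only on the support; adding `c - s.sum`, which vanishes there and is
  -- therefore AGE, makes the decomposition exact.
  have hcorr : IsAGE (Ap ∪ An) (c - s.sum) :=
    (isAGE_iff_of_subset (empty_subset _) fun γ hγ _ => by simp [hsum γ hγ]).1 (isAGE_empty _)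
  obtain ⟨s', hs', hsum', hone⟩ := exists_forall_oneSignedAt subset_rfl ((c - s.sum) ::ₘ s)
    (Multiset.forall_mem_cons.2 ⟨hcorr, hs⟩)
  have hc' : s'.sum = c := by rw [hsum', Multiset.sum_cons, sub_add_cancel]
  refine ⟨s', hc', fun f hf => ⟨hs' f hf, fun α hα => ?_, fun β hβ => ?_⟩⟩
  · exact (hone α (mem_union_left _ hα)).nonneg (hc' ▸ hAp α hα) f hf
  · exact (hone β (mem_union_right _ hβ)).nonpos (hc' ▸ hAn β hβ) f hf

lemma exists_mem_sageExt_of_isAGE {Ap An : Finset (Fin n → ℝ)} (hAn : An.Nonempty)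
    {f : (Fin n → ℝ) → ℝ} (hf : IsAGE (Ap ∪ An) f) (hfAp : ∀ α ∈ Ap, 0 ≤ f α)
    (hfAn : ∀ β ∈ An, f β ≤ 0) : ∃ β ∈ An, f ∈ SAGEExt Ap An β := by
  obtain ⟨β, hβ, hvan⟩ : ∃ β ∈ An, ∀ γ ∈ An, γ ≠ β → f γ = 0 := by
    by_cases hneg : ∃ β ∈ An, f β < 0
    · obtain ⟨β, hβ, hfβ⟩ := hneg
      refine ⟨β, hβ, fun γ hγ hγβ => (hfAn γ hγ).antisymm (not_lt.1 fun hfγ => hγβ ?_)⟩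
      exact hf.1 γ (mem_union_right _ hγ) β (mem_union_right _ hβ) hfγ hfβ
    · push Not at hneg
      obtain ⟨β, hβ⟩ := hAn
      exact ⟨β, hβ, fun γ hγ _ => (hfAn γ hγ).antisymm (hneg γ hγ)⟩
  have hsub : Ap ∪ {β} ⊆ Ap ∪ An := union_subset_union_right (singleton_subset_iff.2 hβ)
  have hage : IsAGE (Ap ∪ {β}) f := by
    refine (isAGE_iff_of_subset hsub fun γ hγ hγβ => hvan γ ?_ ?_).2 hf
    · simp only [mem_union, mem_singleton, not_or] at hγ hγβ
      exact hγ.resolve_left hγβ.1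
    · simp only [mem_union, mem_singleton, not_or] at hγβ
      exact hγβ.2
  refine ⟨β, hβ, hvan, inSAGE_iff_exists_multiset.2 ⟨hfAp, ?_, {f}, by simpa using hage, by simp⟩⟩
  simpa using hfAn β hβ

lemma multiset_sum_mem_finsetSum {ι M : Type*} [AddCommMonoid M] {t : Finset ι}
    {S : ι → AddSubmonoid M} {s : Multiset M} (hs : ∀ x ∈ s, ∃ i ∈ t, x ∈ S i) :
    s.sum ∈ ∑ i ∈ t, (S i : Set M) := by
  classical
  induction s using Multiset.induction_on with
  | empty => simpa using Set.finsetSum_mem_finsetSum t _ (fun _ => 0) fun i _ => (S i).zero_mem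
  | cons x s ih =>
    obtain ⟨i, hi, hx⟩ := hs x (Multiset.mem_cons_self x s)
    obtain ⟨g, hg, hgs⟩ :=
      (Set.mem_finsetSum _ _ _).1 (ih fun y hy => hs y (Multiset.mem_cons_of_mem hy))
    refine (Set.mem_finsetSum _ _ _).2 ⟨Pi.single i x + g, fun {j} hj => ?_, ?_⟩
    · refine (S j).add_mem ?_ (hg hj)
      rcases eq_or_ne j i with rfl | hji
      · simp [hx]
      · simp [hji]
    · simp only [Multiset.sum_cons, ← hgs, Pi.add_apply, sum_add_distrib, sum_pi_single',
        if_pos hi]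

end

theorem sage_eq_minkowski_sum_general {n : ℕ}
    (Ap An : Finset (Fin n → ℝ)) (hAn : An.Nonempty) :
    {c : (Fin n → ℝ) → ℝ | InSAGE Ap An c} = ∑ β ∈ An, SAGEExt Ap An β := by
  ext c
  constructor
  · intro hc
    obtain ⟨s, rfl, hs⟩ := InSAGE.exists_signed_decomposition hc
    exact multiset_sum_mem_finsetSum (S := sageExtAddSubmonoid Ap An) fun f hf =>
      exists_mem_sageExt_of_isAGE hAn (hs f hf).1 (hs f hf).2.1 (hs f hf).2.2
  · intro hc
    obtain ⟨g, hg, rfl⟩ := (Set.mem_finsetSum _ _ _).1 hc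
    exact (sageAddSubmonoid Ap An).sum_mem fun β hβ => inSAGE_of_mem_sageExt hβ (hg hβ)

/-- The signed SONC cone is the Minkowski sum of the single-negative-term
cones `C^A_{(A⁺,{β})}` over `β ∈ A⁻`. -/
theorem sage_eq_minkowski_sum {n : ℕ}
    (Ap An : Finset (Fin n → ℝ)) (hdisj : Disjoint Ap An)
    (hAp : Ap.Nonempty) (hAn : An.Nonempty) :
    {c : (Fin n → ℝ) → ℝ | InSAGE Ap An c} = ∑ β ∈ An, SAGEExt Ap An β :=
  sage_eq_minkowski_sum_general Ap An hAn
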